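/- Let u : X̂ → ℝ be bounded and measurable, and assume that the fiberwise supremum (Mu)(x) := sup_{z ∈ π⁻¹(x)} u(z) is a measurable function on X. Then for every n ≥ 1 and every z ∈ X̂, ∫ u d(κ̂ⁿ z) ≤ ∫ Mu d(κⁿ (π z)); equivalently, sup_{z ∈ π⁻¹(x)} (κ̂ⁿ u)(z) ≤ (κⁿ (Mu))(x) for every x ∈ X, where κⁿ and κ̂ⁿ denote n-fold kernel composition. -/

import Mathlib

/-!
Intertwining passes to iterates, so `κⁿ (π z)` is the pushforward of `κ̂ⁿ z` along `π`. Since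
`u ≤ Mu ∘ π` pointwise, `∫ u d(κ̂ⁿ z) ≤ ∫ Mu ∘ π d(κ̂ⁿ z) = ∫ Mu d(κⁿ (π z))`; the second claim is
the supremum of the first over the fibre `π⁻¹' {x}`, which is nonempty by surjectivity.
-/

open MeasureTheory ProbabilityTheory

noncomputable section

/-- The `n`-fold composition of a kernel, as a measure-valued map:
`kernelIterMeasure q n z` is the law of the `n`-th step of the chain started at `z`. -/
def kernelIterMeasure {Z : Type*} [MeasurableSpace Z] (q : Kernel Z Z) : ℕ → Z → Measure Z
  | 0 => fun z => Measure.dirac z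
  | n + 1 => fun z => (kernelIterMeasure q n z).bind (fun w => q w)

instance isProbabilityMeasure_kernelIterMeasure {Z : Type*} [MeasurableSpace Z] (q : Kernel Z Z)
    [IsMarkovKernel q] (n : ℕ) (z : Z) : IsProbabilityMeasure (kernelIterMeasure q n z) := by
  induction n with
  | zero => exact Measure.dirac.isProbabilityMeasure
  | succ n ih => exact inferInstanceAs (IsProbabilityMeasure (q ∘ₘ kernelIterMeasure q n z))

section Intertwining

variable {Xh X : Type*} [MeasurableSpace Xh] [MeasurableSpace X] {π : Xh → X}
  {κh : Kernel Xh Xh} {κ : Kernel X X}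

lemma map_comp_eq_comp_map_of_intertwine (hπ : Measurable π)
    (h_intertwine : ∀ z, (κh z).map π = κ (π z)) (μ : Measure Xh) :
    (κh ∘ₘ μ).map π = κ ∘ₘ μ.map π := by
  rw [Measure.map_comp μ κh hπ, ← Measure.deterministic_comp_eq_map hπ, Measure.comp_assoc,
    Kernel.comp_deterministic_eq_comap]
  congr 1
  ext1 z
  rw [Kernel.map_apply _ hπ, Kernel.comap_apply, h_intertwine]

lemma map_kernelIterMeasure_of_intertwine (hπ : Measurable π)
    (h_intertwine : ∀ z, (κh z).map π = κ (π z)) (n : ℕ) (z : Xh) :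
    (kernelIterMeasure κh n z).map π = kernelIterMeasure κ n (π z) := by
  induction n with
  | zero => exact Measure.map_dirac' hπ z
  | succ n ih =>
    show (κh ∘ₘ kernelIterMeasure κh n z).map π = κ ∘ₘ kernelIterMeasure κ n (π z)
    rw [← ih]
    exact map_comp_eq_comp_map_of_intertwine hπ h_intertwine _

end Intertwining

section FiberSup

variable {α β : Type*} {π : α → β} {u : α → ℝ}

lemma le_sSup_image_fiber {C : ℝ} (hu_le : ∀ z, u z ≤ C) (z : α) :
    u z ≤ sSup (u '' (π ⁻¹' {π z})) :=
  le_csSup ⟨C, Set.forall_mem_image.2 fun w _ => hu_le w⟩ ⟨z, rfl, rfl⟩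

lemma abs_sSup_image_fiber_le {C : ℝ} (hu_bdd : ∀ z, |u z| ≤ C) (z : α) :
    |sSup (u '' (π ⁻¹' {π z}))| ≤ C := by
  have hu_le : ∀ w, u w ≤ C := fun w => (abs_le.1 (hu_bdd w)).2
  refine abs_le.2 ⟨(abs_le.1 (hu_bdd z)).1.trans (le_sSup_image_fiber hu_le z), ?_⟩
  exact csSup_le ⟨u z, z, rfl, rfl⟩ (Set.forall_mem_image.2 fun w _ => hu_le w)

lemma sSup_image_fiber_le {g : β → ℝ} (hπ : Function.Surjective π) (h : ∀ z, u z ≤ g (π z))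
    (x : β) : sSup (u '' (π ⁻¹' {x})) ≤ g x := by
  obtain ⟨z, rfl⟩ := hπ x
  exact csSup_le ⟨u z, z, rfl, rfl⟩ (Set.forall_mem_image.2 fun w hw => hw ▸ h w)

end FiberSup

lemma integral_le_integral_map_fiberSup {Xh X : Type*} [MeasurableSpace Xh] [MeasurableSpace X]
    {π : Xh → X} (hπ : Measurable π) (μ : Measure Xh) [IsFiniteMeasure μ]
    {u : Xh → ℝ} (hu_meas : Measurable u) {C : ℝ} (hu_bdd : ∀ z, |u z| ≤ C)
    {Mu : X → ℝ} (hMu : ∀ x, Mu x = sSup (u '' (π ⁻¹' {x}))) (hMu_meas : Measurable Mu) :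
    ∫ z, u z ∂μ ≤ ∫ x, Mu x ∂(μ.map π) := by
  have hMu_bdd : ∀ z, ‖Mu (π z)‖ ≤ C := fun z => hMu (π z) ▸ abs_sSup_image_fiber_le hu_bdd z
  rw [integral_map hπ.aemeasurable hMu_meas.aestronglyMeasurable]
  refine integral_mono (.of_bound hu_meas.aestronglyMeasurable C (.of_forall hu_bdd))
    (.of_bound (hMu_meas.comp hπ).aestronglyMeasurable C (.of_forall hMu_bdd)) fun z => ?_
  exact (hMu (π z)).symm ▸ le_sSup_image_fiber (fun w => (abs_le.1 (hu_bdd w)).2) z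

theorem iterated_domination_general
    {Xh X : Type*} [MeasurableSpace Xh] [MeasurableSpace X]
    (π : Xh → X) (hπ_meas : Measurable π) (hπ_surj : Function.Surjective π)
    (κh : Kernel Xh Xh) [IsMarkovKernel κh]
    (κ : Kernel X X)
    (h_intertwine : ∀ z : Xh, (κh z).map π = κ (π z))
    (u : Xh → ℝ) (hu_meas : Measurable u)
    (C : ℝ) (hu_bdd : ∀ z, |u z| ≤ C)
    (Mu : X → ℝ) (hMu : ∀ x, Mu x = sSup (u '' (π ⁻¹' {x})))
    (hMu_meas : Measurable Mu) :
    ∀ n : ℕ, 1 ≤ n →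
      (∀ z : Xh,
        ∫ w, u w ∂(kernelIterMeasure κh n z) ≤ ∫ y, Mu y ∂(kernelIterMeasure κ n (π z))) ∧
      (∀ x : X,
        sSup ((fun z => ∫ w, u w ∂(kernelIterMeasure κh n z)) '' (π ⁻¹' {x}))
          ≤ ∫ y, Mu y ∂(kernelIterMeasure κ n x)) := by
  intro n _
  have h_dom : ∀ z, ∫ w, u w ∂(kernelIterMeasure κh n z)
      ≤ ∫ y, Mu y ∂(kernelIterMeasure κ n (π z)) := fun z => by
    rw [← map_kernelIterMeasure_of_intertwine hπ_meas h_intertwine]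
    exact integral_le_integral_map_fiberSup hπ_meas _ hu_meas hu_bdd hMu hMu_meas
  exact ⟨h_dom, sSup_image_fiber_le hπ_surj h_dom⟩

/-- Domination of iterated fiber operators: for bounded measurable `u`,
`∫ u d(κ̂ⁿ z) ≤ ∫ Mu d(κⁿ (π z))`, where `Mu` is the fiberwise supremum of `u`. -/
theorem iterated_domination
    {Xh X : Type*} [MeasurableSpace Xh] [MeasurableSpace X]
    (π : Xh → X) (hπ_meas : Measurable π) (hπ_surj : Function.Surjective π)
    (κh : Kernel Xh Xh) [IsMarkovKernel κh]
    (κ : Kernel X X) [IsMarkovKernel κ]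
    (h_intertwine : ∀ z : Xh, (κh z).map π = κ (π z))
    (u : Xh → ℝ) (hu_meas : Measurable u)
    (C : ℝ) (hu_bdd : ∀ z, |u z| ≤ C)
    (Mu : X → ℝ) (hMu : ∀ x, Mu x = sSup (u '' (π ⁻¹' {x})))
    (hMu_meas : Measurable Mu) :
    ∀ n : ℕ, 1 ≤ n →
      (∀ z : Xh,
        ∫ w, u w ∂(kernelIterMeasure κh n z) ≤ ∫ y, Mu y ∂(kernelIterMeasure κ n (π z))) ∧
      (∀ x : X,
        sSup ((fun z => ∫ w, u w ∂(kernelIterMeasure κh n z)) '' (π ⁻¹' {x}))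
          ≤ ∫ y, Mu y ∂(kernelIterMeasure κ n x)) :=
  iterated_domination_general π hπ_meas hπ_surj κh κ h_intertwine u hu_meas C hu_bdd Mu hMu hMu_meas

end
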